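/- Let N ≥ 1 and suppose the matrix-valued function E on ℝ^N satisfies, for all indices i, j, m: ∂_m E_{ij} - ∂_j E_{im} = E_{lj} ∂_l E_{im} - E_{lm} ∂_l E_{ij} (summation over l). Then for each fixed i, j one has the identity Λ^{-1}∂_j ∂_k E_{ik} = -Λ E_{ij} + Λ^{-1}∂_k (E_{lk} ∂_l E_{ij} - E_{lj} ∂_l E_{ik}), where Λ = √(-Δ) and Λ^{-1}∂_k are Fourier multipliers with symbols |ξ| and -iξ_k/|ξ| respectively, acting on Schwartz-class (or suitably decaying smooth) functions E. -/

import Mathlib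

/-!
Substituting the compatibility constraint turns the right-hand side into
`-Λ E_ij + Λ⁻¹∂_k (∂_j E_ik - ∂_k E_ij)`. With `𝓕 (∂_k f) = 2πi ξ_k 𝓕 f`, the multiplier
`Λ⁻¹∂_k ∘ ∂_j` has symbol `(i ξ_k / |ξ|)(2πi ξ_j) = -2π ξ_j ξ_k / |ξ|`, that of `Λ⁻¹∂_j∂_k`,
and `∑_k Λ⁻¹∂_k ∘ ∂_k` has symbol `-2π |ξ|`, that of `-Λ`. The inverse Fourier transform may be
split along these sums because `i ξ_k / |ξ|` is bounded, so each summand is integrable.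
-/

open MeasureTheory FourierTransform Real Complex

/-- Spatial partial derivative `∂_i f`. -/
noncomputable def pd {N : ℕ} (i : Fin N)
    (f : EuclideanSpace ℝ (Fin N) → ℝ) (x : EuclideanSpace ℝ (Fin N)) : ℝ :=
  fderiv ℝ f x (EuclideanSpace.single i 1)

/-- Fourier multiplier operator with symbol `m`, acting on a real-valued
function: `f ↦ 𝓕⁻(m · 𝓕 f)`. -/
noncomputable def fourierMul {N : ℕ} (m : EuclideanSpace ℝ (Fin N) → ℂ)
    (f : EuclideanSpace ℝ (Fin N) → ℝ) : EuclideanSpace ℝ (Fin N) → ℂ :=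
  𝓕⁻ (fun ξ => m ξ * 𝓕 (fun x => (f x : ℂ)) ξ)

/-- `Λ = √(-Δ)`, the Fourier multiplier with symbol `2π|ξ|`. -/
noncomputable def Lam {N : ℕ} (f : EuclideanSpace ℝ (Fin N) → ℝ) :
    EuclideanSpace ℝ (Fin N) → ℂ :=
  fourierMul (fun ξ => (2 * π * ‖ξ‖ : ℝ)) f

/-- `Λ⁻¹∂_k`, the Fourier multiplier with symbol `i ξ_k / |ξ|`. -/
noncomputable def invLamD {N : ℕ} (k : Fin N) (f : EuclideanSpace ℝ (Fin N) → ℝ) :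
    EuclideanSpace ℝ (Fin N) → ℂ :=
  fourierMul (fun ξ => Complex.I * (ξ k : ℝ) / (‖ξ‖ : ℝ)) f

/-- `Λ⁻¹∂_j∂_k`, the Fourier multiplier with symbol `-2π ξ_j ξ_k / |ξ|`. -/
noncomputable def invLamDD {N : ℕ} (j k : Fin N) (f : EuclideanSpace ℝ (Fin N) → ℝ) :
    EuclideanSpace ℝ (Fin N) → ℂ :=
  fourierMul (fun ξ => -(2 * π * (ξ j) * (ξ k) / ‖ξ‖ : ℝ)) f

open scoped LineDeriv RealInnerProductSpace

namespace SchwartzMap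

section OfReal

variable {V : Type*} [NormedAddCommGroup V] [NormedSpace ℝ V]

noncomputable def ofRealCLM : 𝓢(V, ℝ) →L[ℝ] 𝓢(V, ℂ) := postcompCLM Complex.ofRealCLM

@[simp]
theorem coe_ofRealCLM (g : 𝓢(V, ℝ)) : ⇑(ofRealCLM g) = fun x => (g x : ℂ) := rfl

theorem lineDerivOp_ofRealCLM (g : 𝓢(V, ℝ)) (v : V) :
    ∂_{v} (ofRealCLM g) = ofRealCLM (∂_{v} g) := by
  ext x
  have : (ofRealCLM g : V → ℂ) = Complex.ofRealCLM ∘ g := rfl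
  rw [lineDerivOp_apply_eq_fderiv, this,
    (Complex.ofRealCLM.hasFDerivAt.comp x (g.hasFDerivAt x)).fderiv]
  rfl

end OfReal

variable {V : Type*} [NormedAddCommGroup V] [InnerProductSpace ℝ V] [FiniteDimensional ℝ V]
  [MeasurableSpace V] [BorelSpace V]

theorem fourier_ofReal_fderiv (g : 𝓢(V, ℝ)) (v ξ : V) :
    𝓕 (fun x => (fderiv ℝ g x v : ℂ)) ξ = 2 * π * I * ⟪ξ, v⟫ * 𝓕 (fun x => (g x : ℂ)) ξ := by
  have hv : (fun x : V => ⟪x, v⟫).HasTemperateGrowth := ((innerSL ℝ).flip v).hasTemperateGrowth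
  calc 𝓕 (fun x => (fderiv ℝ g x v : ℂ)) ξ = 𝓕 (∂_{v} (ofRealCLM g)) ξ := by
        rw [lineDerivOp_ofRealCLM]; rfl
    _ = _ := by
        rw [fourier_lineDerivOp_eq, smul_apply, smulLeftCLM_apply_apply hv]
        simp only [fourier_coe, coe_ofRealCLM, real_smul, smul_eq_mul]
        ring

theorem integrable_mul_fourier_ofReal (g : 𝓢(V, ℝ)) {m : V → ℂ} {C : ℝ}
    (hm : AEStronglyMeasurable m) (hmC : ∀ ξ, ‖m ξ‖ ≤ C) :
    Integrable (fun ξ => m ξ * 𝓕 (fun x => (g x : ℂ)) ξ) :=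
  (𝓕 (ofRealCLM g)).integrable.bdd_mul hm (ae_of_all _ hmC)

end SchwartzMap

namespace Real

variable {V E : Type*} [NormedAddCommGroup V] [InnerProductSpace ℝ V] [FiniteDimensional ℝ V]
  [MeasurableSpace V] [BorelSpace V] [NormedAddCommGroup E] [NormedSpace ℂ E]

theorem fourierInv_sub_apply {F G : V → E} (hF : Integrable F) (hG : Integrable G) (w : V) :
    𝓕⁻ (fun ξ => F ξ - G ξ) w = 𝓕⁻ F w - 𝓕⁻ G w := by
  simp only [fourierInv_eq_fourier_neg, fourier_eq, smul_sub]
  exact integral_sub ((fourierIntegral_convergent_iff _).2 hF)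
    ((fourierIntegral_convergent_iff _).2 hG)

theorem fourierInv_sum_apply {ι : Type*} (s : Finset ι) {F : ι → V → E}
    (hF : ∀ k ∈ s, Integrable (F k)) (w : V) :
    𝓕⁻ (fun ξ => ∑ k ∈ s, F k ξ) w = ∑ k ∈ s, 𝓕⁻ (F k) w := by
  simp only [fourierInv_eq_fourier_neg, fourier_eq, Finset.smul_sum]
  exact integral_finsetSum s fun k hk => (fourierIntegral_convergent_iff _).2 (hF k hk)

theorem fourierInv_neg_apply (F : V → E) (w : V) : 𝓕⁻ (fun ξ => -F ξ) w = -𝓕⁻ F w := by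
  simp only [fourierInv_eq, smul_neg, integral_neg]

end Real

section Multipliers

variable {N : ℕ}

local notation "V" => EuclideanSpace ℝ (Fin N)

theorem pd_eq_lineDerivOp (k : Fin N) (g : SchwartzMap V ℝ) :
    pd k g = ⇑(∂_{EuclideanSpace.single k (1 : ℝ)} g : SchwartzMap V ℝ) := rfl

theorem fourier_ofReal_pd (k : Fin N) (g : SchwartzMap V ℝ) (ξ : V) :
    𝓕 (fun x => (pd k g x : ℂ)) ξ = 2 * π * I * ξ k * 𝓕 (fun x => (g x : ℂ)) ξ := by
  simp [pd, SchwartzMap.fourier_ofReal_fderiv, EuclideanSpace.inner_single_right]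

theorem fourierMul_sub {m : V → ℂ} {C : ℝ} (hm : AEStronglyMeasurable m) (hmC : ∀ ξ, ‖m ξ‖ ≤ C)
    (f g : SchwartzMap V ℝ) : fourierMul m ⇑(f - g) = fourierMul m f - fourierMul m g := by
  ext x
  have hfg : 𝓕 (fun y => ((f - g) y : ℂ)) = 𝓕 (fun y => (f y : ℂ)) - 𝓕 (fun y => (g y : ℂ)) := by
    rw [← SchwartzMap.coe_ofRealCLM, ← SchwartzMap.coe_ofRealCLM, ← SchwartzMap.coe_ofRealCLM,
      ← SchwartzMap.fourier_coe, ← SchwartzMap.fourier_coe, ← SchwartzMap.fourier_coe, map_sub,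
      sub_eq_add_neg, FourierAdd.fourier_add, FourierTransform.fourier_neg]
    rfl
  simp only [fourierMul, hfg, Pi.sub_apply, mul_sub]
  exact Real.fourierInv_sub_apply (SchwartzMap.integrable_mul_fourier_ofReal f hm hmC)
    (SchwartzMap.integrable_mul_fourier_ofReal g hm hmC) x

theorem norm_invLamD_symbol_le_one (k : Fin N) (ξ : V) : ‖I * (ξ k : ℂ) / (‖ξ‖ : ℂ)‖ ≤ 1 := by
  simp only [norm_div, norm_mul, Complex.norm_I, one_mul, Complex.norm_real, Real.norm_eq_abs,
    abs_norm]
  exact div_le_one_of_le₀ (PiLp.norm_apply_le ξ k) (norm_nonneg ξ)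

theorem aestronglyMeasurable_invLamD_symbol (k : Fin N) :
    AEStronglyMeasurable (fun ξ : V => I * (ξ k : ℂ) / (‖ξ‖ : ℂ)) :=
  (by fun_prop : Measurable _).aestronglyMeasurable

theorem invLamD_sub (k : Fin N) (f g : SchwartzMap V ℝ) :
    invLamD k ⇑(f - g) = invLamD k f - invLamD k g :=
  fourierMul_sub (aestronglyMeasurable_invLamD_symbol k) (norm_invLamD_symbol_le_one k) f g

theorem invLamD_pd (j k : Fin N) (g : SchwartzMap V ℝ) : invLamD k (pd j g) = invLamDD j k g := by
  unfold invLamD invLamDD fourierMul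
  congr 1
  ext ξ
  rw [fourier_ofReal_pd]
  push_cast
  linear_combination (2 * π * ξ j * ξ k / ‖ξ‖ * 𝓕 (fun x => (g x : ℂ)) ξ : ℂ) * I_sq

theorem sum_invLamD_pd (g : SchwartzMap V ℝ) (x : V) : ∑ k, invLamD k (pd k g) x = -Lam g x := by
  have hint : ∀ k ∈ Finset.univ, Integrable
      (fun ξ : V => I * (ξ k : ℂ) / (‖ξ‖ : ℂ) * 𝓕 (fun y => (pd k g y : ℂ)) ξ) :=
    fun k _ => SchwartzMap.integrable_mul_fourier_ofReal (∂_{EuclideanSpace.single k (1 : ℝ)} g)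
      (aestronglyMeasurable_invLamD_symbol k) (norm_invLamD_symbol_le_one k)
  unfold invLamD Lam fourierMul
  rw [← Real.fourierInv_sum_apply _ hint, ← Real.fourierInv_neg_apply]
  refine congrArg (fun F : V → ℂ => 𝓕⁻ F x) (funext fun ξ => ?_)
  set F := 𝓕 (fun y => (g y : ℂ)) ξ
  have hsq : ∑ k, (ξ k : ℂ) ^ 2 = (‖ξ‖ : ℂ) ^ 2 := by
    exact_mod_cast (EuclideanSpace.real_norm_sq_eq ξ).symm
  calc ∑ k, I * ξ k / ‖ξ‖ * 𝓕 (fun y => (pd k g y : ℂ)) ξ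
      = ∑ k, -(2 * π / ‖ξ‖ * F) * (ξ k : ℂ) ^ 2 := by
        refine Finset.sum_congr rfl fun k _ => ?_
        rw [fourier_ofReal_pd]
        linear_combination (2 * π / ‖ξ‖ * F * (ξ k : ℂ) ^ 2) * I_sq
    _ = -((2 * π * ‖ξ‖ : ℝ) * F) := by
        rw [← Finset.mul_sum, hsq]
        rcases eq_or_ne ‖ξ‖ 0 with h0 | h0
        · simp [h0]
        · push_cast
          field_simp

end Multipliers

theorem strain_compatibility_identity_general (N : ℕ)
    (E : Fin N → Fin N → SchwartzMap (EuclideanSpace ℝ (Fin N)) ℝ)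
    (hcomp : ∀ (i j m : Fin N) (x : EuclideanSpace ℝ (Fin N)),
      pd m (⇑(E i j)) x - pd j (⇑(E i m)) x =
        ∑ l, (E l j x * pd l (⇑(E i m)) x - E l m x * pd l (⇑(E i j)) x))
    (i j : Fin N) (x : EuclideanSpace ℝ (Fin N)) :
    ∑ k, invLamDD j k (⇑(E i k)) x =
      -(Lam (⇑(E i j)) x) +
        ∑ k, invLamD k
          (fun y => ∑ l, (E l k y * pd l (⇑(E i j)) y - E l j y * pd l (⇑(E i k)) y)) x := by
  have hcurl : ∀ k, (fun y => ∑ l, (E l k y * pd l (⇑(E i j)) y - E l j y * pd l (⇑(E i k)) y))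
      = ⇑(∂_{EuclideanSpace.single j (1 : ℝ)} (E i k)
          - ∂_{EuclideanSpace.single k (1 : ℝ)} (E i j)) :=
    fun k => funext fun y => (hcomp i k j y).symm
  have hterm : ∀ k, invLamD k
      (fun y => ∑ l, (E l k y * pd l (⇑(E i j)) y - E l j y * pd l (⇑(E i k)) y)) x
      = invLamDD j k (E i k) x - invLamD k (pd k (E i j)) x := by
    intro k
    rw [hcurl k, invLamD_sub, Pi.sub_apply, ← pd_eq_lineDerivOp, ← pd_eq_lineDerivOp, invLamD_pd]
  rw [Finset.sum_congr rfl fun k _ => hterm k, Finset.sum_sub_distrib, sum_invLamD_pd]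
  ring

/-- If the strain tensor `E` satisfies the compatibility constraint
`∂_m E_{ij} - ∂_j E_{im} = E_{lj} ∂_l E_{im} - E_{lm} ∂_l E_{ij}`, then
`Λ⁻¹∂_j ∂_k E_{ik} = -Λ E_{ij} + Λ⁻¹∂_k (E_{lk} ∂_l E_{ij} - E_{lj} ∂_l E_{ik})`
(summation over repeated indices `k`, `l`). -/
theorem strain_compatibility_identity (N : ℕ) (hN : 1 ≤ N)
    (E : Fin N → Fin N → SchwartzMap (EuclideanSpace ℝ (Fin N)) ℝ)
    (hcomp : ∀ (i j m : Fin N) (x : EuclideanSpace ℝ (Fin N)),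
      pd m (⇑(E i j)) x - pd j (⇑(E i m)) x =
        ∑ l, (E l j x * pd l (⇑(E i m)) x - E l m x * pd l (⇑(E i j)) x))
    (i j : Fin N) (x : EuclideanSpace ℝ (Fin N)) :
    ∑ k, invLamDD j k (⇑(E i k)) x =
      -(Lam (⇑(E i j)) x) +
        ∑ k, invLamD k
          (fun y => ∑ l, (E l k y * pd l (⇑(E i j)) y - E l j y * pd l (⇑(E i k)) y)) x :=
  strain_compatibility_identity_general N E hcomp i j x
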